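/- arXiv:1006.2792 — 3 statements merged into one kernel-verified Lean document; each statement's English description precedes it below -/
import Mathlib

section
/- For 0 < α < 1, the variable period T_α(x) = -x + (x^α + 2π)^(1/α) is strictly monotonically increasing on (0, ∞). -/
/-!
Substituting `y = x ^ α` turns `T_α` into `y ↦ (y + 2π) ^ p - y ^ p` with `p = 1 / α > 1`,
composed with the increasing map `x ↦ x ^ α`. The increments of a strictly convex function over
intervals of a fixed length `2π` grow strictly with the left endpoint.
-/

open Real

theorem StrictConvexOn.map_add_sub_map_lt {𝕜 : Type*} [Field 𝕜] [LinearOrder 𝕜]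
    [IsStrictOrderedRing 𝕜] {s : Set 𝕜} {f : 𝕜 → 𝕜} (hf : StrictConvexOn 𝕜 s f) {a b c : 𝕜}
    (ha : a ∈ s) (hbc : b + c ∈ s) (hc : 0 < c) (hab : a < b) :
    f (a + c) - f a < f (b + c) - f b := by
  -- `a + c` and `b` are mirror-image convex combinations of `a` and `b + c`.
  have h₁ := hf.secant_strict_mono_aux1 ha hbc (lt_add_of_pos_right a hc) (by linarith)
  have h₂ := hf.secant_strict_mono_aux1 ha hbc hab (lt_add_of_pos_right b hc)
  have hsum : (b + c - a) * (f (a + c) - f a) < (b + c - a) * (f (b + c) - f b) := by linarith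
  exact lt_of_mul_lt_mul_left hsum (by linarith)

theorem stmt_4 (α : ℝ) (hα0 : 0 < α) (hα1 : α < 1) :
    StrictMonoOn (fun x : ℝ => -x + (x ^ α + 2 * π) ^ (1 / α)) (Set.Ioi 0) := by
  intro x (hx : 0 < x) y (hy : 0 < y) hxy
  have hp : 1 < 1 / α := one_lt_one_div hα0 hα1
  have key := (strictConvexOn_rpow hp).map_add_sub_map_lt (rpow_nonneg hx.le α)
    (by positivity : (0 : ℝ) ≤ y ^ α + 2 * π) (by positivity) (rpow_lt_rpow hx.le hxy hα0)
  simp only [one_div, rpow_rpow_inv hx.le hα0.ne', rpow_rpow_inv hy.le hα0.ne'] at key ⊢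
  linarith
end

section
/- For α > 1, the variable period T_α(x) = -x + (x^α + 2π)^(1/α) is strictly monotonically decreasing on (0, ∞). -/
/-!
`T_α(x) + x = (x^α + c)^(1/α)` has derivative `x^(α-1) (x^α + c)^(1/α - 1)`, which equals
`(x^α / (x^α + c))^((α-1)/α)` and so lies strictly below `1` when `c > 0` and `α > 1`;
hence `T_α' < 0` on `(0, ∞)`.
-/

open Real

namespace Real

variable {α c x : ℝ}

theorem hasDerivAt_rpow_add_const_rpow_one_div (hα : α ≠ 0) (hc : 0 ≤ c) (hx : 0 < x) :
    HasDerivAt (fun y : ℝ => (y ^ α + c) ^ (1 / α))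
      (x ^ (α - 1) * (x ^ α + c) ^ (1 / α - 1)) x := by
  have hbase : x ^ α + c ≠ 0 := by positivity
  convert ((hasDerivAt_rpow_const (p := α) (Or.inl hx.ne')).add_const c).rpow_const
    (p := 1 / α) (Or.inl hbase) using 1
  field_simp

theorem rpow_sub_one_mul_rpow_add_const_lt_one (hα : 1 < α) (hc : 0 < c) (hx : 0 < x) :
    x ^ (α - 1) * (x ^ α + c) ^ (1 / α - 1) < 1 := by
  have hα0 : 0 < α := by linarith
  have hbase : 0 < x ^ α + c := by positivity
  have hexp : 0 < (α - 1) / α := div_pos (by linarith) hα0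
  have hx_pow : x ^ (α - 1) = (x ^ α) ^ ((α - 1) / α) := by
    rw [← rpow_mul hx.le]
    congr 1
    field_simp
  have hbase_pow : (x ^ α + c) ^ (1 / α - 1) = ((x ^ α + c) ^ ((α - 1) / α))⁻¹ := by
    rw [← rpow_neg hbase.le]
    congr 1
    field_simp
    ring
  rw [hx_pow, hbase_pow, ← div_eq_mul_inv, div_lt_one (by positivity)]
  exact rpow_lt_rpow (by positivity) (by linarith) hexp

theorem strictAntiOn_neg_add_rpow_add_const_rpow_one_div (hα : 1 < α) (hc : 0 < c) :
    StrictAntiOn (fun x : ℝ => -x + (x ^ α + c) ^ (1 / α)) (Set.Ioi 0) := by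
  have hα0 : α ≠ 0 := by positivity
  have hderiv : ∀ x ∈ Set.Ioi (0 : ℝ), HasDerivAt (fun x : ℝ => -x + (x ^ α + c) ^ (1 / α))
      (-1 + x ^ (α - 1) * (x ^ α + c) ^ (1 / α - 1)) x := fun x hx =>
    (hasDerivAt_neg x).add (hasDerivAt_rpow_add_const_rpow_one_div hα0 hc.le hx)
  refine strictAntiOn_of_hasDerivWithinAt_neg (convex_Ioi 0)
    (fun x hx => (hderiv x hx).continuousAt.continuousWithinAt)
    (fun x hx => (hderiv x (interior_subset hx)).hasDerivWithinAt) fun x hx => ?_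
  rw [interior_Ioi] at hx
  linarith [rpow_sub_one_mul_rpow_add_const_lt_one hα hc hx]

end Real

theorem stmt_5 (α : ℝ) (hα : 1 < α) :
    StrictAntiOn (fun x : ℝ => -x + (x ^ α + 2 * π) ^ (1 / α)) (Set.Ioi 0) :=
  strictAntiOn_neg_add_rpow_add_const_rpow_one_div hα (by positivity)
end

section
/- Let α > 0, x₀ ≥ 0, and T(x₀) = -x₀ + (x₀^α + 2π)^(1/α). Then for all positive integers m ≠ n, ∫ from x₀ to x₀ + T(x₀) of x^(α-1) · sin(m x^α) · sin(n x^α) dx = 0. -/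
/-!
The substitution `u = x ^ α` turns the integral into `α⁻¹` times the integral of
`sin (m u) * sin (n u)` over `[x₀ ^ α, x₀ ^ α + 2π]`, which is a full period; there the product
`2 sin (m u) sin (n u) = cos ((m - n) u) - cos ((m + n) u)` integrates to zero.
-/

open Real intervalIntegral

theorem integral_comp_rpow_mul_rpow_sub_one {α a b : ℝ} (hα : 0 < α) (ha : 0 ≤ a) (hb : 0 ≤ b)
    (g : ℝ → ℝ) :
    ∫ x in a..b, x ^ (α - 1) * g (x ^ α) = α⁻¹ * ∫ u in a ^ α..b ^ α, g u := by
  have hpos : ∀ x ∈ Set.Ioo (min a b) (max a b), 0 < x := fun x hx =>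
    (le_min ha hb).trans_lt hx.1
  have hsubst := integral_comp_mul_deriv_of_deriv_nonneg (g := g)
    (f := fun x => x ^ α) (f' := fun x => α * x ^ (α - 1))
    (continuous_rpow_const hα.le).continuousOn
    (fun x hx => hasDerivAt_rpow_const (Or.inl (hpos x hx).ne'))
    (fun x hx => by have := hpos x hx; positivity)
  rw [← hsubst, ← integral_const_mul]
  congr 1 with x
  simp only [Function.comp_apply]
  field_simp

theorem integral_cos_int_mul_period (k : ℤ) (hk : k ≠ 0) (t : ℝ) :
    ∫ u in t..t + 2 * π, cos (k * u) = 0 := by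
  have hk' : (k : ℝ) ≠ 0 := Int.cast_ne_zero.mpr hk
  rw [integral_comp_mul_left (fun u => cos u) hk', integral_cos, mul_add,
    sin_add_int_mul_two_pi, sub_self, smul_zero]

theorem integral_sin_int_mul_mul_sin_int_mul_period {m n : ℤ} (hmn : m ≠ n) (hmn' : m + n ≠ 0)
    (t : ℝ) :
    ∫ u in t..t + 2 * π, sin (m * u) * sin (n * u) = 0 := by
  have hprod : ∀ u : ℝ, sin (m * u) * sin (n * u) =
      (cos (((m - n : ℤ) : ℝ) * u) - cos (((m + n : ℤ) : ℝ) * u)) / 2 := by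
    intro u
    push_cast
    rw [sub_mul, add_mul, cos_sub, cos_add]
    ring
  simp_rw [hprod]
  rw [integral_div, integral_sub ((by fun_prop : Continuous _).intervalIntegrable _ _)
    ((by fun_prop : Continuous _).intervalIntegrable _ _),
    integral_cos_int_mul_period _ (sub_ne_zero.mpr hmn),
    integral_cos_int_mul_period _ hmn', sub_self, zero_div]

theorem stmt_9_general (α x₀ : ℝ) (hα : 0 < α) (hx₀ : 0 ≤ x₀)
    (T : ℝ) (hT : T = -x₀ + (x₀ ^ α + 2 * π) ^ (1 / α))
    (m n : ℕ) (hmn : m ≠ n) :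
    ∫ x in x₀..(x₀ + T), x ^ (α - 1) * Real.sin (m * x ^ α) * Real.sin (n * x ^ α) = 0 := by
  have hperiod : 0 ≤ x₀ ^ α + 2 * π := by positivity
  have hend : x₀ + T = (x₀ ^ α + 2 * π) ^ α⁻¹ := by rw [hT, one_div]; ring
  have hend_rpow : (x₀ + T) ^ α = x₀ ^ α + 2 * π := by
    rw [hend, rpow_inv_rpow hperiod hα.ne']
  have hdiff : (m : ℤ) ≠ n := by exact_mod_cast hmn
  have hsum : (m : ℤ) + n ≠ 0 := by omega
  simp_rw [mul_assoc]
  rw [integral_comp_rpow_mul_rpow_sub_one (g := fun u => sin (m * u) * sin (n * u)) hα hx₀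
      (hend ▸ rpow_nonneg hperiod _), hend_rpow]
  have horth := integral_sin_int_mul_mul_sin_int_mul_period hdiff hsum (x₀ ^ α)
  push_cast at horth
  rw [horth, mul_zero]

theorem stmt_9 (α x₀ : ℝ) (hα : 0 < α) (hx₀ : 0 ≤ x₀)
    (T : ℝ) (hT : T = -x₀ + (x₀ ^ α + 2 * π) ^ (1 / α))
    (m n : ℕ) (hm : 0 < m) (hn : 0 < n) (hmn : m ≠ n) :
    ∫ x in x₀..(x₀ + T), x ^ (α - 1) * Real.sin (m * x ^ α) * Real.sin (n * x ^ α) = 0 :=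
  stmt_9_general α x₀ hα hx₀ T hT m n hmn
end
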